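/- The assignments of Proposition 1 are mutually inverse: for a t-structure (X, Y) on a triangulated category D with heart H, the map sending a t-structure (X', Y') with X[1] ⊆ X' ⊆ X to (H ∩ X', H ∩ Y'), and the map sending a torsion pair (T, F) in H to (⟨T, X[1]⟩, ⟨Y, F⟩), are mutually inverse bijections between the set of such intermediate t-structures and the set of torsion pairs in H. -/

import Mathlib

open CategoryTheory Category Limits Pretriangulated

namespace Paper

variable {C : Type*} [Category C] [HasZeroObject C] [Preadditive C] [HasShift C ℤ]
  [∀ n : ℤ, (shiftFunctor C n).Additive] [Pretriangulated C]

/-- The shift of a class of objects: `S⟦n⟧` (closed under isomorphism). -/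
def shiftSet (S : Set C) (n : ℤ) : Set C := {X | ∃ A ∈ S, Nonempty (X ≅ A⟦n⟧)}

/-- `S[≤ n] = { S⟦i⟧ ∣ S ∈ S, i ≤ n }`. -/
def shiftsLe (S : Set C) (n : ℤ) : Set C := {X | ∃ A ∈ S, ∃ i : ℤ, i ≤ n ∧ Nonempty (X ≅ A⟦i⟧)}

/-- `S[≥ n] = { S⟦i⟧ ∣ S ∈ S, i ≥ n }`. -/
def shiftsGe (S : Set C) (n : ℤ) : Set C := {X | ∃ A ∈ S, ∃ i : ℤ, n ≤ i ∧ Nonempty (X ≅ A⟦i⟧)}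

/-- `X * Y`: objects `D` fitting in a distinguished triangle `X → D → Y → X⟦1⟧`. -/
def star (X Y : Set C) : Set C :=
  {D | ∃ (A B : C) (f : A ⟶ D) (g : D ⟶ B) (h : B ⟶ A⟦(1 : ℤ)⟧),
    A ∈ X ∧ B ∈ Y ∧ Triangle.mk f g h ∈ distTriang C}

/-- Right perpendicular class. -/
def rightPerp (S : Set C) : Set C := {D | ∀ A ∈ S, ∀ f : A ⟶ D, f = 0}

/-- Left perpendicular class. -/
def leftPerp (S : Set C) : Set C := {D | ∀ B ∈ S, ∀ f : D ⟶ B, f = 0}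

/-- A t-structure `(X, Y)` on a (pre)triangulated category. -/
structure IsTStructure (X Y : Set C) : Prop where
  rp : rightPerp X = Y
  lp : leftPerp Y = X
  dec : ∀ D : C, D ∈ star X Y
  shift : shiftSet X 1 ⊆ X

/-- The heart `H = X ∩ Y⟦1⟧` of a t-structure. -/
def heart (X Y : Set C) : Set C := X ∩ shiftSet Y 1

/-- The extension closure of a class of objects. -/
inductive ExtClosure (S : Set C) : C → Prop
  | of {A : C} (h : A ∈ S) : ExtClosure S A
  | iso {A B : C} (e : A ≅ B) (h : ExtClosure S A) : ExtClosure S B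
  | ext {A E B : C} (f : A ⟶ E) (g : E ⟶ B) (h : B ⟶ A⟦(1 : ℤ)⟧)
      (hT : Triangle.mk f g h ∈ distTriang C)
      (hA : ExtClosure S A) (hB : ExtClosure S B) : ExtClosure S E

/-- The extension closure, as a set. -/
def extClosure (S : Set C) : Set C := {X | ExtClosure S X}

/-- A torsion pair `(T, F)` in the heart of a t-structure `(X, Y)`; short exact sequences in
the heart correspond to distinguished triangles with three terms in the heart. -/
structure IsHeartTorsionPair (X Y T F : Set C) : Prop where
  subT : T ⊆ heart X Y
  subF : F ⊆ heart X Y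
  rp : heart X Y ∩ rightPerp T = F
  lp : heart X Y ∩ leftPerp F = T
  dec : ∀ H₀ ∈ heart X Y, H₀ ∈ star T F

/-- A bounded t-structure. -/
def IsBounded (X Y : Set C) : Prop :=
  (∀ D : C, ∃ n : ℤ, D ∈ shiftSet X n) ∧ (∀ D : C, ∃ n : ℤ, D ∈ shiftSet Y n)

/-- A simple object of the heart of a t-structure: a nonzero object admitting no proper
subobjects in the heart (expressed via distinguished triangles with entries in the heart). -/
def IsSimpleInHeart (X Y : Set C) (A : C) : Prop :=
  A ∈ heart X Y ∧ ¬ IsZero A ∧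
  ∀ (A' B : C) (f : A' ⟶ A) (g : A ⟶ B) (h : B ⟶ A'⟦(1 : ℤ)⟧),
    Triangle.mk f g h ∈ (distTriang C) → A' ∈ heart X Y → B ∈ heart X Y →
    IsZero A' ∨ IsZero B

/-- An algebraic t-structure: a bounded t-structure whose heart is a length category with
finitely many simple objects, i.e. the heart is the extension closure of finitely many
simple objects. -/
def IsAlgebraic (X Y : Set C) : Prop :=
  IsTStructure X Y ∧ IsBounded X Y ∧
  ∃ (t : ℕ) (G : Fin t → C), (∀ i, IsSimpleInHeart X Y (G i)) ∧
    heart X Y = extClosure (Set.range G)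

/-- Thick closure: the smallest triangulated subcategory closed under direct summands. -/
inductive ThickClosure (S : Set C) : C → Prop
  | of {A : C} (h : A ∈ S) : ThickClosure S A
  | iso {A B : C} (e : A ≅ B) (h : ThickClosure S A) : ThickClosure S B
  | shift {A : C} (n : ℤ) (h : ThickClosure S A) : ThickClosure S (A⟦n⟧)
  | ext {A E B : C} (f : A ⟶ E) (g : E ⟶ B) (h : B ⟶ A⟦(1 : ℤ)⟧)
      (hT : Triangle.mk f g h ∈ distTriang C)
      (hA : ThickClosure S A) (hB : ThickClosure S B) : ThickClosure S E
  | retract {A B : C} (s : A ⟶ B) (r : B ⟶ A) (hsr : s ≫ r = 𝟙 A)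
      (h : ThickClosure S B) : ThickClosure S A

/-- Thick closure, as a set. -/
def thickClosure (S : Set C) : Set C := {X | ThickClosure S X}

/-- `Hom(S, T⟦i⟧) = 0` for all `i > 0`. -/
def vanishHomPos (S T : Set C) : Prop :=
  ∀ A ∈ S, ∀ B ∈ T, ∀ i : ℤ, 0 < i → ∀ f : A ⟶ B⟦i⟧, f = 0

/-- A silting subcategory `S` of the (thick) subcategory `P`. -/
def IsSiltingIn (P S : Set C) : Prop :=
  S ⊆ P ∧ thickClosure S = P ∧ vanishHomPos S S

/-- The aisle `X_S = (S[≤ 0])^⊥` of the t-structure associated to a silting subcategory. -/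
def siltXs (S : Set C) : Set C := rightPerp (shiftsLe S 0)

/-- The coaisle `Y_S = (S[≥ 0])^⊥` of the t-structure associated to a silting subcategory. -/
def siltYs (S : Set C) : Set C := rightPerp (shiftsGe S 0)

/-- A class of objects closed under isomorphisms, finite direct sums and direct summands. -/
def IsAddClosed [HasBinaryBiproducts C] (S : Set C) : Prop :=
  (∀ A B : C, (A ≅ B) → A ∈ S → B ∈ S) ∧
  (∀ A B : C, A ∈ S → B ∈ S → (A ⊞ B) ∈ S) ∧
  (∀ A B : C, (∃ (s : A ⟶ B) (r : B ⟶ A), s ≫ r = 𝟙 A) → B ∈ S → A ∈ S)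

/-- Silting-discreteness (relative to the subcategory `P` of compact objects, e.g.
`K^b(proj Λ)`): for every silting subcategory `S` of `P` there are only finitely many silting
subcategories `T` with `S ≥ T ≥ S⟦1⟧`. -/
def IsSiltingDiscrete [HasBinaryBiproducts C] (P : Set C) : Prop :=
  ∀ S : Set C, IsSiltingIn P S → IsAddClosed S →
    {T : Set C | IsSiltingIn P T ∧ IsAddClosed T ∧
      vanishHomPos S T ∧ vanishHomPos T (shiftSet S 1)}.Finite

/-- A t-structure on a full (pre)triangulated subcategory `B` of the ambient category. -/
structure IsTStructureOn (B X Y : Set C) : Prop where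
  subX : X ⊆ B
  subY : Y ⊆ B
  rp : B ∩ rightPerp X = Y
  lp : B ∩ leftPerp Y = X
  dec : ∀ D ∈ B, D ∈ star X Y
  shift : shiftSet X 1 ⊆ X

/-! Perpendicular classes, hence aisles and coaisles, are closed under extensions; this gives one
inclusion in each of the four identities, the torsion-pair ones via `T = H ∩ ⊥F` and
`F = H ∩ T^⊥`. Conversely, an object `D` of an intermediate aisle `X'` decomposes along the
shifted t-structure `(X[1], Y[1])` as `A → D → B` with `A ∈ X[1]`, and `B` lies in `X' ∩ Y[1]`,
which is `H ∩ X'` because `X' ⊆ X`. An object `D` of `Y'` decomposes along `(X, Y)` as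
`a → D → b` with `b ∈ Y`, and `a` lies in `Y'` and in `X[1]^⊥ = Y[1]`, so in `H ∩ Y'`. -/

section Perp

variable {S P : Set C}

section Preadditive

omit [HasZeroObject C] [HasShift C ℤ] [∀ n : ℤ, (shiftFunctor C n).Additive] [Pretriangulated C]

lemma rightPerp_anti (h : S ⊆ P) : rightPerp P ⊆ rightPerp S :=
  fun _ hD A hA f => hD A (h hA) f

lemma mem_rightPerp_of_iso {D D' : C} (e : D ≅ D') (hD : D ∈ rightPerp S) :
    D' ∈ rightPerp S := by
  intro A hA f
  rw [← cancel_mono e.inv, hD A hA (f ≫ e.inv), zero_comp]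

lemma mem_leftPerp_of_iso {D D' : C} (e : D ≅ D') (hD : D ∈ leftPerp S) :
    D' ∈ leftPerp S := by
  intro B hB f
  rw [← cancel_epi e.hom, hD B hB (e.hom ≫ f), comp_zero]

end Preadditive

lemma mem_rightPerp_of_distTriang (T : Triangle C) (hT : T ∈ distTriang C)
    (h₁ : T.obj₁ ∈ rightPerp S) (h₃ : T.obj₃ ∈ rightPerp S) : T.obj₂ ∈ rightPerp S := by
  intro A hA f
  obtain ⟨g, rfl⟩ := T.coyoneda_exact₂ hT f (h₃ A hA _)
  rw [h₁ A hA g, zero_comp]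

lemma mem_leftPerp_of_distTriang (T : Triangle C) (hT : T ∈ distTriang C)
    (h₁ : T.obj₁ ∈ leftPerp S) (h₃ : T.obj₃ ∈ leftPerp S) : T.obj₂ ∈ leftPerp S := by
  intro B hB f
  obtain ⟨g, rfl⟩ := T.yoneda_exact₂ hT f (h₁ B hB _)
  rw [h₃ B hB g, comp_zero]

end Perp

structure IsExtClosed (P : Set C) : Prop where
  iso : ∀ {A B : C}, (A ≅ B) → A ∈ P → B ∈ P
  ext : ∀ T ∈ distTriang C, T.obj₁ ∈ P → T.obj₃ ∈ P → T.obj₂ ∈ P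

lemma IsExtClosed.extClosure_subset {S P : Set C} (hP : IsExtClosed P) (hS : S ⊆ P) :
    extClosure S ⊆ P := by
  intro A hA
  induction hA with
  | of h => exact hS h
  | iso e _ ih => exact hP.iso e ih
  | ext f g h hT _ _ ihA ihB => exact hP.ext _ hT ihA ihB

lemma isExtClosed_rightPerp (S : Set C) : IsExtClosed (rightPerp S) :=
  ⟨mem_rightPerp_of_iso, mem_rightPerp_of_distTriang⟩

lemma isExtClosed_leftPerp (S : Set C) : IsExtClosed (leftPerp S) :=
  ⟨mem_leftPerp_of_iso, mem_leftPerp_of_distTriang⟩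

section Shift

variable {S P : Set C}

section Additive

omit [HasZeroObject C] [Pretriangulated C]

omit [Preadditive C] [∀ n : ℤ, (shiftFunctor C n).Additive] in
lemma shift_mem_shiftSet {A : C} (hA : A ∈ S) (n : ℤ) : A⟦n⟧ ∈ shiftSet S n :=
  ⟨A, hA, ⟨Iso.refl _⟩⟩

lemma shiftSet_subset_rightPerp_shiftSet (h : S ⊆ rightPerp P) (n : ℤ) :
    shiftSet S n ⊆ rightPerp (shiftSet P n) := by
  rintro B ⟨y, hy, ⟨e⟩⟩ A ⟨a, ha, ⟨e'⟩⟩ f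
  obtain ⟨g, hg⟩ := (shiftFunctor C n).map_surjective (e'.inv ≫ f ≫ e.hom)
  rw [← cancel_epi e'.inv, ← cancel_mono e.hom, assoc, ← hg, h hy a ha g, Functor.map_zero]
  simp

lemma shift_neg_one_mem_rightPerp {D : C} (hD : D ∈ rightPerp (shiftSet S 1)) :
    D⟦(-1 : ℤ)⟧ ∈ rightPerp S := by
  intro A hA f
  apply (shiftFunctor C (1 : ℤ)).map_injective
  rw [← cancel_mono (shiftNegShift D (1 : ℤ)).hom, hD _ (shift_mem_shiftSet hA 1) (_ ≫ _),
    Functor.map_zero, zero_comp]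

end Additive

lemma star_of_iso {D D' : C} (e : D ≅ D') (hD : D ∈ star S P) : D' ∈ star S P := by
  obtain ⟨A, B, f, g, h, hA, hB, hT⟩ := hD
  refine ⟨A, B, f ≫ e.hom, e.inv ≫ g, h, hA, hB, isomorphic_distinguished _ hT _ ?_⟩
  refine Triangle.isoMk _ _ (Iso.refl A) e.symm (Iso.refl B) ?_ ?_ ?_
  · change (f ≫ e.hom) ≫ e.inv = 𝟙 A ≫ f
    simp
  · change (e.inv ≫ g) ≫ 𝟙 B = e.inv ≫ g
    simp
  · change h ≫ (shiftFunctor C 1).map (𝟙 A) = 𝟙 B ≫ h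
    simp

lemma shift_mem_star_shiftSet {D : C} (hD : D ∈ star S P) (n : ℤ) :
    D⟦n⟧ ∈ star (shiftSet S n) (shiftSet P n) := by
  obtain ⟨A, B, f, g, h, hA, hB, hT⟩ := hD
  let T := (Triangle.shiftFunctor C n).obj (Triangle.mk f g h)
  exact ⟨_, _, T.mor₁, T.mor₂, T.mor₃, shift_mem_shiftSet hA n, shift_mem_shiftSet hB n,
    Triangle.shift_distinguished _ hT n⟩

end Shift

namespace IsTStructure

variable {X Y S : Set C}

lemma isExtClosed_aisle (h : IsTStructure X Y) : IsExtClosed X :=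
  h.lp ▸ isExtClosed_leftPerp Y

lemma isExtClosed_coaisle (h : IsTStructure X Y) : IsExtClosed Y :=
  h.rp ▸ isExtClosed_rightPerp X

lemma coaisle_subset_rightPerp (h : IsTStructure X Y) (hS : S ⊆ X) : Y ⊆ rightPerp S :=
  h.rp ▸ rightPerp_anti hS

lemma shift_neg_one_mem_coaisle (h : IsTStructure X Y) {D : C} (hD : D ∈ Y) :
    D⟦(-1 : ℤ)⟧ ∈ Y :=
  h.rp ▸ shift_neg_one_mem_rightPerp (h.coaisle_subset_rightPerp h.shift hD)

lemma mem_shiftSet_of_mem_rightPerp (h : IsTStructure X Y) {D : C}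
    (hD : D ∈ rightPerp (shiftSet X 1)) : D ∈ shiftSet Y 1 :=
  ⟨_, h.rp ▸ shift_neg_one_mem_rightPerp hD, ⟨(shiftNegShift D (1 : ℤ)).symm⟩⟩

lemma shiftSet_coaisle_subset_rightPerp (h : IsTStructure X Y) :
    shiftSet Y 1 ⊆ rightPerp (shiftSet X 1) :=
  shiftSet_subset_rightPerp_shiftSet h.rp.ge 1

lemma mem_star_shiftSet (h : IsTStructure X Y) (D : C) :
    D ∈ star (shiftSet X 1) (shiftSet Y 1) :=
  star_of_iso (shiftNegShift D (1 : ℤ)) (shift_mem_star_shiftSet (h.dec _) 1)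

end IsTStructure

section Intermediate

variable {X Y X' Y' : Set C}

lemma extClosure_heart_inter_union_shiftSet (h : IsTStructure X Y) (h' : IsTStructure X' Y')
    (hX₁ : shiftSet X 1 ⊆ X') (hX' : X' ⊆ X) :
    extClosure ((heart X Y ∩ X') ∪ shiftSet X 1) = X' := by
  refine (h'.isExtClosed_aisle.extClosure_subset (Set.union_subset Set.inter_subset_right hX₁))
    |>.antisymm fun D hD => ?_
  obtain ⟨A, B, f, g, w, hA, hB, hT⟩ := h.mem_star_shiftSet D
  have hBX' : B ∈ X' := h'.isExtClosed_aisle.ext _ (rot_of_distTriang _ hT) hD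
    (hX₁ (shift_mem_shiftSet (hX' (hX₁ hA)) 1))
  exact ExtClosure.ext f g w hT (.of (Or.inr hA)) (.of (Or.inl ⟨⟨hX' hBX', hB⟩, hBX'⟩))

lemma extClosure_union_heart_inter (h : IsTStructure X Y) (h' : IsTStructure X' Y')
    (hX₁ : shiftSet X 1 ⊆ X') (hX' : X' ⊆ X) :
    extClosure (Y ∪ (heart X Y ∩ Y')) = Y' := by
  have hYY' : Y ⊆ Y' := h'.rp ▸ h.coaisle_subset_rightPerp hX'
  refine (h'.isExtClosed_coaisle.extClosure_subset (Set.union_subset hYY' Set.inter_subset_right))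
    |>.antisymm fun D hD => ?_
  obtain ⟨a, b, f, g, w, ha, hb, hT⟩ := h.dec D
  have hT' := inv_rot_of_distTriang _ hT
  have hb' := h.shift_neg_one_mem_coaisle hb
  have haY' : a ∈ Y' := h'.isExtClosed_coaisle.ext _ hT' (hYY' hb') hD
  have ha₁ : a ∈ rightPerp (shiftSet X 1) := (isExtClosed_rightPerp _).ext _ hT'
    (h.coaisle_subset_rightPerp h.shift hb') (h'.coaisle_subset_rightPerp hX₁ hD)
  exact ExtClosure.ext f g w hT (.of (Or.inr ⟨⟨ha, h.mem_shiftSet_of_mem_rightPerp ha₁⟩, haY'⟩))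
    (.of (Or.inl hb))

end Intermediate

namespace IsHeartTorsionPair

variable {X Y T F : Set C}

lemma heart_inter_extClosure_union_shiftSet (tp : IsHeartTorsionPair X Y T F)
    (h : IsTStructure X Y) : heart X Y ∩ extClosure (T ∪ shiftSet X 1) = T := by
  refine subset_antisymm ?_ fun t ht => ⟨tp.subT ht, .of (Or.inl ht)⟩
  have hF : T ∪ shiftSet X 1 ⊆ leftPerp F := Set.union_subset (tp.lp ▸ Set.inter_subset_right)
    fun A hA B hB f => h.shiftSet_coaisle_subset_rightPerp (tp.subF hB).2 A hA f
  calc heart X Y ∩ extClosure (T ∪ shiftSet X 1) ⊆ heart X Y ∩ leftPerp F :=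
        Set.inter_subset_inter_right _ ((isExtClosed_leftPerp F).extClosure_subset hF)
    _ = T := tp.lp

lemma heart_inter_extClosure_coaisle_union (tp : IsHeartTorsionPair X Y T F)
    (h : IsTStructure X Y) : heart X Y ∩ extClosure (Y ∪ F) = F := by
  refine subset_antisymm ?_ fun f hf => ⟨tp.subF hf, .of (Or.inr hf)⟩
  have hT : Y ∪ F ⊆ rightPerp T := Set.union_subset
    (h.coaisle_subset_rightPerp (tp.subT.trans Set.inter_subset_left))
    (tp.rp ▸ Set.inter_subset_right)
  calc heart X Y ∩ extClosure (Y ∪ F) ⊆ heart X Y ∩ rightPerp T :=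
        Set.inter_subset_inter_right _ ((isExtClosed_rightPerp T).extClosure_subset hT)
    _ = F := tp.rp

end IsHeartTorsionPair

/-- The assignments of Proposition 1 (HRS-tilting) are mutually inverse:
starting from an intermediate t-structure `(X', Y')`, tilting at the torsion pair
`(H ∩ X', H ∩ Y')` recovers `(X', Y')`; starting from a torsion pair `(T, F)` in the heart,
intersecting the tilted t-structure with the heart recovers `(T, F)`. -/
theorem statement2 (X Y : Set C) (h : IsTStructure X Y) :
    (∀ X' Y' : Set C, IsTStructure X' Y' → shiftSet X 1 ⊆ X' → X' ⊆ X →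
      extClosure ((heart X Y ∩ X') ∪ shiftSet X 1) = X' ∧
      extClosure (Y ∪ (heart X Y ∩ Y')) = Y') ∧
    (∀ T F : Set C, IsHeartTorsionPair X Y T F →
      heart X Y ∩ extClosure (T ∪ shiftSet X 1) = T ∧
      heart X Y ∩ extClosure (Y ∪ F) = F) :=
  ⟨fun _ _ h' hX₁ hX' => ⟨extClosure_heart_inter_union_shiftSet h h' hX₁ hX',
      extClosure_union_heart_inter h h' hX₁ hX'⟩,
    fun _ _ tp => ⟨tp.heart_inter_extClosure_union_shiftSet h,
      tp.heart_inter_extClosure_coaisle_union h⟩⟩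

end Paper
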